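/- Let V be a finite set, b : V → ℝ with ∑_{v ∈ V} b(v) = 0 and ∑_{v ∈ V} max(b(v), 0) = 1, and r ∈ V. Let T ⊆ V with r ∈ T contain every vertex with b(v) > 0 and carry an in-tree parent function p_T rooted at r; let U ⊆ V with r ∈ U contain every vertex with b(v) < 0 and carry an out-tree parent function p_U rooted at r. Let v_1, …, v_n enumerate T∖{r} in leaf-to-root order, let D(v) = ∑_{w descendant of v in U} max(−b(w), 0) for v ∈ U and D(v) = 0 otherwise, let s_0(v) = max(b(v), 0), and for k = 1, …, n obtain s_k from s_{k−1} by transferring a(v_k) := min(s_{k−1}(v_k), 1 − D(v_k)) from v_k to p_T(v_k). Define f : V × V → ℝ by f(v, w) = [v ∈ T∖{r} and w = p_T(v)] · a(v) + [w ∈ U∖{r} and v = p_U(w)] · (D(w) − ∑_{u descendant of w in U} s_n(u)), with s_n extended by 0 outside T. Then f ≥ 0 and for every vertex v ∈ V, b(v) + ∑_{u ∈ V} f(u, v) − ∑_{w ∈ V} f(v, w) = 0; that is, the flow constructed by the modified Goldberg–Rao algorithm is nonnegative and has zero balance at every vertex. -/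

import Mathlib

/-!
The flow is the sum of two tree flows. On the in-tree `T` the edge `v → p_T v` carries `a v`,
the amount the greedy pass moves out of `v`, so its net outflow at `x` is `s₀ x - sₙ x`. On the
out-tree `U` the edge `p_U w → w` carries the sum of `dem - sₙ` over the descendants of `w`
(`dem = max (-b) 0`); since the descendant sets of the children of `w` partition those of `w`
minus `w`, and `dem - sₙ` has total `0`, its net outflow is `dem x - sₙ x`. The two add up to
`b x - max (b x) 0 + max (-b x) 0 = 0`.

Nonnegativity on `U` says that no subtree ends up with more supply than its demand `D`. Let `v_i`
be the last processed vertex of the subtree that keeps supply. Its transfer was then capped at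
`1 - D (v_i)`, which `p_T (v_i)` received; since `v_1, …, v_i` never change afterwards and the
total supply is `1`, they keep at most `D (v_i)`, which is at most the demand of the subtree.
-/

/-- `u` is a descendant of `x` in the tree given by the parent function `p`
rooted at `r`: iterating `p` from `u` reaches `x` (without first leaving the
tree through the root `r`). Every vertex is a descendant of itself. -/
def IsDesc {V : Type*} (p : V → V) (r : V) (u x : V) : Prop :=
  ∃ k : ℕ, p^[k] u = x ∧ ∀ j < k, p^[j] u ≠ r

open Finset

theorem sum_max_neg_zero_eq_of_sum_eq_zero {ι : Type*} {t : Finset ι} {b : ι → ℝ}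
    (hb : ∑ i ∈ t, b i = 0) : ∑ i ∈ t, max (-b i) 0 = ∑ i ∈ t, max (b i) 0 := by
  have := sum_congr rfl fun i (_ : i ∈ t) => max_zero_sub_max_neg_zero_eq_self (b i)
  rw [sum_sub_distrib, hb, sub_eq_zero] at this
  exact this.symm

section

open Classical

variable {V : Type*}

section Tree

variable {p : V → V} {r u w x : V}

theorem IsDesc.refl (p : V → V) (r x : V) : IsDesc p r x x :=
  ⟨0, rfl, fun _ h => absurd h (Nat.not_lt_zero _)⟩

theorem IsDesc.trans (h₁ : IsDesc p r w u) (h₂ : IsDesc p r u x) : IsDesc p r w x := by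
  obtain ⟨k, rfl, hk⟩ := h₁
  obtain ⟨m, rfl, hm⟩ := h₂
  refine ⟨m + k, Function.iterate_add_apply .., fun j hj => ?_⟩
  rcases lt_or_ge j k with hjk | hjk
  · exact hk j hjk
  · rw [← Nat.sub_add_cancel hjk, Function.iterate_add_apply]
    exact hm (j - k) (by omega)

theorem IsDesc.eq_of_root (h : IsDesc p r r x) : x = r := by
  obtain ⟨_ | k, rfl, hk⟩ := h
  · rfl
  · exact absurd rfl (hk 0 k.succ_pos)

theorem iterate_mem_of_forall_ne {U : Finset V} (hpU : ∀ u ∈ U, u ≠ r → p u ∈ U) (hw : w ∈ U) :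
    ∀ k, (∀ j < k, p^[j] w ≠ r) → p^[k] w ∈ U
  | 0, _ => hw
  | k + 1, hk => by
    rw [Function.iterate_succ_apply']
    exact hpU _ (iterate_mem_of_forall_ne hpU hw k fun j hj => hk j (by omega)) (hk k (by omega))

noncomputable def rootDist (p : V → V) (r u : V) : ℕ :=
  if h : ∃ k, p^[k] u = r then Nat.find h else 0

theorem iterate_rootDist (h : ∃ k, p^[k] u = r) : p^[rootDist p r u] u = r := by
  rw [rootDist, dif_pos h]
  exact Nat.find_spec h

theorem iterate_ne_of_lt_rootDist (h : ∃ k, p^[k] u = r) {j : ℕ} (hj : j < rootDist p r u) :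
    p^[j] u ≠ r := by
  rw [rootDist, dif_pos h] at hj
  exact Nat.find_min h hj

theorem rootDist_eq_of_iterate {k : ℕ} (hk : p^[k] u = r) (hmin : ∀ j < k, p^[j] u ≠ r) :
    rootDist p r u = k := by
  rw [rootDist, dif_pos ⟨k, hk⟩, Nat.find_eq_iff]
  exact ⟨hk, hmin⟩

theorem rootDist_iterate (h : ∃ k, p^[k] u = r) {k : ℕ} (hk : k ≤ rootDist p r u) :
    rootDist p r (p^[k] u) = rootDist p r u - k := by
  apply rootDist_eq_of_iterate
  · rw [← Function.iterate_add_apply, Nat.sub_add_cancel hk, iterate_rootDist h]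
  · intro j hj
    rw [← Function.iterate_add_apply]
    exact iterate_ne_of_lt_rootDist h (by omega)

theorem rootDist_parent (h : ∃ k, p^[k] u = r) (hu : u ≠ r) :
    rootDist p r (p u) + 1 = rootDist p r u := by
  have hpos : 1 ≤ rootDist p r u := by
    by_contra! h0
    exact hu (by simpa [Nat.lt_one_iff.1 h0] using iterate_rootDist h)
  have := rootDist_iterate h hpos
  rw [Function.iterate_one] at this
  omega

theorem isDesc_iff_exists_le_rootDist (h : ∃ k, p^[k] w = r) :
    IsDesc p r w x ↔ ∃ k ≤ rootDist p r w, p^[k] w = x := by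
  constructor
  · rintro ⟨k, hk, hne⟩
    refine ⟨k, ?_, hk⟩
    by_contra! hlt
    exact hne _ hlt (iterate_rootDist h)
  · rintro ⟨k, hk, rfl⟩
    exact ⟨k, rfl, fun j hj => iterate_ne_of_lt_rootDist h (by omega)⟩

variable [Fintype V]

noncomputable def descendants (p : V → V) (r : V) (U : Finset V) (x : V) : Finset V :=
  univ.filter (fun w => w ∈ U ∧ IsDesc p r w x)

noncomputable def children (p : V → V) (r : V) (U : Finset V) (x : V) : Finset V :=
  (U.erase r).filter (fun c => p c = x)

variable {U : Finset V}

theorem descendants_subset_of_isDesc (h : IsDesc p r w x) :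
    descendants p r U w ⊆ descendants p r U x := by
  intro u hu
  simp only [descendants, mem_filter, mem_univ, true_and] at hu ⊢
  exact ⟨hu.1, hu.2.trans h⟩

theorem descendants_eq_empty_of_notMem (hpU : ∀ u ∈ U, u ≠ r → p u ∈ U) (hx : x ∉ U) :
    descendants p r U x = ∅ := by
  refine filter_eq_empty_iff.2 fun w _ ⟨hw, k, hk, hne⟩ => hx ?_
  exact hk ▸ iterate_mem_of_forall_ne hpU hw k hne

theorem descendants_root (hroot : ∀ u ∈ U, ∃ k, p^[k] u = r) : descendants p r U r = U := by
  ext w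
  simp only [descendants, mem_filter, mem_univ, true_and, and_iff_left_iff_imp]
  exact fun hw => ⟨_, iterate_rootDist (hroot w hw),
    fun _ => iterate_ne_of_lt_rootDist (hroot w hw)⟩

theorem pairwiseDisjoint_descendants_children (hroot : ∀ u ∈ U, ∃ k, p^[k] u = r) (x : V) :
    (children p r U x : Set V).PairwiseDisjoint (descendants p r U) := by
  intro c hc c' hc' hne
  simp only [children, mem_coe, mem_filter, mem_erase] at hc hc'
  refine disjoint_left.2 fun w hw hw' => hne ?_
  simp only [descendants, mem_filter, mem_univ, true_and] at hw hw'
  have hwr := hroot w hw.1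
  obtain ⟨k, hk, rfl⟩ := (isDesc_iff_exists_le_rootDist hwr).1 hw.2
  obtain ⟨k', hk', rfl⟩ := (isDesc_iff_exists_le_rootDist hwr).1 hw'.2
  -- both children lie on the path from `w` to the root, one step further from it than `x`
  have e := rootDist_parent (hroot _ hc.1.2) hc.1.1
  have e' := rootDist_parent (hroot _ hc'.1.2) hc'.1.1
  rw [hc.2, ← hc'.2, rootDist_iterate hwr hk] at e
  rw [rootDist_iterate hwr hk'] at e'
  rw [show k = k' by omega]

theorem biUnion_children_descendants (hpU : ∀ u ∈ U, u ≠ r → p u ∈ U)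
    (hroot : ∀ u ∈ U, ∃ k, p^[k] u = r) (x : V) :
    (children p r U x).biUnion (descendants p r U) = (descendants p r U x).erase x := by
  ext w
  simp only [children, descendants, mem_biUnion, mem_filter, mem_erase, mem_univ, true_and]
  constructor
  · rintro ⟨c, ⟨⟨hcr, hc⟩, rfl⟩, hw, hwc⟩
    refine ⟨?_, hw, hwc.trans ⟨1, rfl, fun j hj => by simpa [Nat.lt_one_iff.1 hj] using hcr⟩⟩
    rintro rfl
    obtain ⟨k, hk, hkc⟩ := (isDesc_iff_exists_le_rootDist (hroot _ hw)).1 hwc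
    have hdist := rootDist_iterate (hroot _ hw) hk
    rw [hkc] at hdist
    have := rootDist_parent (hroot _ hc) hcr
    omega
  · rintro ⟨hwx, hw, _ | k, rfl, hk⟩
    · exact absurd rfl hwx
    exact ⟨p^[k] w, ⟨⟨hk k k.lt_succ_self,
      iterate_mem_of_forall_ne hpU hw k fun j hj => hk j (by omega)⟩,
      (Function.iterate_succ_apply' ..).symm⟩, hw, k, rfl, fun j hj => hk j (by omega)⟩

theorem sum_descendants (hpU : ∀ u ∈ U, u ≠ r → p u ∈ U)
    (hroot : ∀ u ∈ U, ∃ k, p^[k] u = r) (hx : x ∈ U) (h : V → ℝ) :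
    ∑ w ∈ descendants p r U x, h w
      = h x + ∑ c ∈ children p r U x, ∑ w ∈ descendants p r U c, h w := by
  have hmem : x ∈ descendants p r U x := by
    simpa [descendants, hx] using IsDesc.refl p r x
  rw [← sum_biUnion (pairwiseDisjoint_descendants_children hroot x),
    biUnion_children_descendants hpU hroot, add_sum_erase _ _ hmem]

end Tree

section Flow

variable {p : V → V} {r : V} {U : Finset V}

noncomputable def parentEdgeFlow (p : V → V) (r : V) (U : Finset V) (g : V → ℝ) (x y : V) : ℝ :=
  if x ∈ U ∧ x ≠ r ∧ y = p x then g x else 0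

theorem parentEdgeFlow_nonneg {g : V → ℝ} (hg : ∀ x ∈ U, x ≠ r → 0 ≤ g x) (x y : V) :
    0 ≤ parentEdgeFlow p r U g x y := by
  unfold parentEdgeFlow
  split_ifs with hx
  exacts [hg x hx.1 hx.2.1, le_rfl]

variable [Fintype V]

noncomputable def subtreeSum (p : V → V) (r : V) (U : Finset V) (h : V → ℝ) (x : V) : ℝ :=
  ∑ w ∈ descendants p r U x, h w

theorem sum_parentEdgeFlow_sub_sum (g : V → ℝ) (x : V) :
    ∑ y, parentEdgeFlow p r U g x y - ∑ y, parentEdgeFlow p r U g y x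
      = (if x ∈ U.erase r then g x else 0) - ∑ c ∈ children p r U x, g c := by
  simp only [parentEdgeFlow]
  congr 1
  · by_cases hx : x ∈ U.erase r
    · obtain ⟨hxr, hxU⟩ := mem_erase.1 hx
      simp [hx, hxr, hxU]
    · rw [if_neg hx]
      exact sum_eq_zero fun y _ => if_neg fun h => hx (mem_erase.2 ⟨h.2.1, h.1⟩)
  · rw [← sum_filter]
    refine sum_congr ?_ fun _ _ => rfl
    ext c
    simp only [children, mem_filter, mem_univ, true_and, mem_erase]
    grind

theorem subtreeSum_sub_sum_children (hrU : r ∈ U) (hpU : ∀ u ∈ U, u ≠ r → p u ∈ U)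
    (hroot : ∀ u ∈ U, ∃ k, p^[k] u = r) {h : V → ℝ} (hsupp : ∀ x ∉ U, h x = 0)
    (hsum : ∑ x, h x = 0) (x : V) :
    (if x ∈ U.erase r then subtreeSum p r U h x else 0)
      - ∑ c ∈ children p r U x, subtreeSum p r U h c = h x := by
  by_cases hx : x ∈ U
  · have hsplit := sum_descendants hpU hroot hx h
    by_cases hxr : x = r
    · subst hxr
      have hroot_sum : subtreeSum p x U h x = 0 := by
        rw [subtreeSum, descendants_root hroot, ← hsum]
        exact sum_subset (subset_univ U) fun y _ hy => hsupp y hy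
      rw [if_neg (notMem_erase x U)]
      unfold subtreeSum at *
      linarith
    · rw [if_pos (mem_erase.2 ⟨hxr, hx⟩)]
      unfold subtreeSum
      linarith
  · have hchildren : children p r U x = ∅ := filter_eq_empty_iff.2 fun c hc hcx =>
      hx (hcx ▸ hpU c (mem_erase.1 hc).2 (mem_erase.1 hc).1)
    rw [if_neg (fun h => hx (mem_of_mem_erase h)), hchildren, sum_empty, hsupp x hx]
    ring

theorem sum_parentEdgeFlow_subtreeSum_sub_sum (hrU : r ∈ U) (hpU : ∀ u ∈ U, u ≠ r → p u ∈ U)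
    (hroot : ∀ u ∈ U, ∃ k, p^[k] u = r) {h : V → ℝ} (hsupp : ∀ x ∉ U, h x = 0)
    (hsum : ∑ x, h x = 0) (x : V) :
    ∑ y, parentEdgeFlow p r U (subtreeSum p r U h) x y
      - ∑ y, parentEdgeFlow p r U (subtreeSum p r U h) y x = h x := by
  rw [sum_parentEdgeFlow_sub_sum, subtreeSum_sub_sum_children hrU hpU hroot hsupp hsum]

end Flow

section Transfer

variable {n : ℕ} {s : ℕ → V → ℝ} {src dst : Fin n → V} {amt cap : Fin n → ℝ}

def IsTransferSeq (s : ℕ → V → ℝ) (src dst : Fin n → V) (amt : Fin n → ℝ) : Prop :=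
  ∀ (i : Fin n) (u : V),
    s (i + 1) u = s i u + (if u = dst i then amt i else 0) - (if u = src i then amt i else 0)

theorem isTransferSeq_of_apply (hne : ∀ i, src i ≠ dst i)
    (hsrc : ∀ i : Fin n, s (i + 1) (src i) = s i (src i) - amt i)
    (hdst : ∀ i : Fin n, s (i + 1) (dst i) = s i (dst i) + amt i)
    (hother : ∀ (i : Fin n) u, u ≠ src i → u ≠ dst i → s (i + 1) u = s i u) :
    IsTransferSeq s src dst amt := by
  intro i u
  by_cases hus : u = src i
  · rw [hus, hsrc, if_neg (hne i), if_pos rfl]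
    ring
  · by_cases hud : u = dst i
    · rw [hud, hdst, if_pos rfl, if_neg (hne i).symm]
      ring
    · rw [hother i u hus hud, if_neg hus, if_neg hud]
      ring

namespace IsTransferSeq

theorem sub_apply_zero (hs : IsTransferSeq s src dst amt) (u : V) :
    s n u - s 0 u = ∑ i, ((if u = dst i then amt i else 0) - (if u = src i then amt i else 0)) := by
  rw [← sum_range_sub (fun k => s k u), ← Fin.sum_univ_eq_sum_range]
  refine sum_congr rfl fun i _ => ?_
  rw [hs i u]
  ring

theorem apply_eq_of_forall_ne (hs : IsTransferSeq s src dst amt) {u : V} {m k : ℕ}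
    (hmk : m ≤ k) (hk : k ≤ n) (hu : ∀ i : Fin n, m ≤ i → u ≠ dst i ∧ u ≠ src i) :
    s k u = s m u := by
  induction k, hmk using Nat.le_induction with
  | base => rfl
  | succ k hmk ih =>
    rw [hs ⟨k, hk⟩ u, if_neg (hu _ hmk).1, if_neg (hu _ hmk).2, ih (by omega)]
    ring

theorem nonneg (hs : IsTransferSeq s src dst amt) (h0 : ∀ u, 0 ≤ s 0 u)
    (hamt : ∀ i, amt i = min (s i (src i)) (cap i)) (hcap : ∀ i, 0 ≤ cap i)
    {k : ℕ} (hk : k ≤ n) (u : V) : 0 ≤ s k u := by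
  induction k generalizing u with
  | zero => exact h0 u
  | succ k ih =>
    have ha₀ : 0 ≤ amt ⟨k, hk⟩ := (hamt _).symm ▸ le_min (ih (by omega) _) (hcap _)
    have ha : amt ⟨k, hk⟩ ≤ s k (src ⟨k, hk⟩) := (hamt _).symm ▸ min_le_left _ _
    rw [hs ⟨k, hk⟩ u]
    split_ifs with h₁ h₂ h₂
    · linarith [ih (by omega) u]
    · linarith [ih (by omega) u]
    · subst h₂
      linarith
    · linarith [ih (by omega) u]

theorem amt_nonneg (hs : IsTransferSeq s src dst amt) (h0 : ∀ u, 0 ≤ s 0 u)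
    (hamt : ∀ i, amt i = min (s i (src i)) (cap i)) (hcap : ∀ i, 0 ≤ cap i) (i : Fin n) :
    0 ≤ amt i :=
  (hamt i).symm ▸ le_min (hs.nonneg h0 hamt hcap i.isLt.le _) (hcap i)

theorem apply_src (hs : IsTransferSeq s src dst amt) (hinj : Function.Injective src)
    (horder : ∀ i j, dst i = src j → i < j) (i : Fin n) {k : ℕ} (hik : i < k) (hk : k ≤ n) :
    s k (src i) = s i (src i) - amt i := by
  have hne : src i ≠ dst i := fun h => lt_irrefl i (horder i i h.symm)
  rw [hs.apply_eq_of_forall_ne hik hk fun j hj => ⟨fun h => ?_, fun h => ?_⟩, hs i, if_neg hne,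
    if_pos rfl]
  · ring
  · exact absurd (horder j i h.symm) (by simp only [not_lt, Fin.le_def]; omega)
  · exact absurd (hinj h) (by simp only [Fin.ext_iff]; omega)

theorem apply_eq_zero_of_notMem {T : Finset V} (hs : IsTransferSeq s src dst amt)
    (hsrc : ∀ i, src i ∈ T) (hdst : ∀ i, dst i ∈ T) (h0 : ∀ u ∉ T, s 0 u = 0) {u : V}
    (hu : u ∉ T) : s n u = 0 := by
  rw [hs.apply_eq_of_forall_ne (Nat.zero_le n) le_rfl fun i _ =>
    ⟨fun (h : u = _) => hu (h ▸ hdst i), fun (h : u = _) => hu (h ▸ hsrc i)⟩, h0 u hu]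

variable [Fintype V]

theorem sum_eq (hs : IsTransferSeq s src dst amt) {k : ℕ} (hk : k ≤ n) :
    ∑ u, s k u = ∑ u, s 0 u := by
  induction k with
  | zero => rfl
  | succ k ih =>
    rw [← ih (by omega), sum_congr rfl fun u _ => hs ⟨k, hk⟩ u]
    simp only [sum_sub_distrib, sum_add_distrib, sum_ite_eq', mem_univ, if_true]
    ring

theorem apply_src_eq_zero (hs : IsTransferSeq s src dst amt) (hinj : Function.Injective src)
    (horder : ∀ i j, dst i = src j → i < j) (h0 : ∀ u, 0 ≤ s 0 u)
    (hamt : ∀ i, amt i = min (s i (src i)) (cap i)) (hcap : ∀ i, 0 ≤ cap i) (i : Fin n)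
    (hcapi : ∑ u, s 0 u ≤ cap i) : s n (src i) = 0 := by
  have hle : s i (src i) ≤ cap i := by
    calc s i (src i) ≤ ∑ u, s i u :=
          single_le_sum (fun u _ => hs.nonneg h0 hamt hcap i.isLt.le u) (mem_univ _)
      _ ≤ cap i := hs.sum_eq i.isLt.le ▸ hcapi
  rw [hs.apply_src hinj horder i i.isLt le_rfl, hamt, min_eq_left hle, sub_self]

-- From time `i + 1` on the sources `src j`, `j ≤ i`, are frozen, and `dst i` holds at least
-- `amt i`, which is `cap i` because `src i` kept some supply.
theorem sum_Iic_le (hs : IsTransferSeq s src dst amt) (hinj : Function.Injective src)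
    (horder : ∀ i j, dst i = src j → i < j) (h0 : ∀ u, 0 ≤ s 0 u)
    (hamt : ∀ i, amt i = min (s i (src i)) (cap i)) (hcap : ∀ i, 0 ≤ cap i) (i : Fin n)
    (hpos : 0 < s n (src i)) : ∑ j ∈ Iic i, s n (src j) ≤ ∑ u, s 0 u - cap i := by
  have hnonneg : ∀ k ≤ n, ∀ u, 0 ≤ s k u := fun k hk => hs.nonneg h0 hamt hcap hk
  have hsrc := hs.apply_src hinj horder
  have hfrozen : ∀ j ∈ Iic i, s n (src j) = s (i + 1) (src j) := fun j hj => by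
    rw [hsrc j j.isLt le_rfl, hsrc j (Nat.lt_succ_of_le (Fin.le_def.1 (mem_Iic.1 hj))) i.isLt]
  have hamt_cap : amt i = cap i := by
    have hlt : amt i < s i (src i) := by linarith [hsrc i i.isLt le_rfl]
    rw [hamt] at hlt ⊢
    exact min_eq_right (le_of_lt (by simpa using hlt))
  have hdst : amt i ≤ s (i + 1) (dst i) := by
    rw [hs i, if_pos rfl, if_neg fun h => lt_irrefl i (horder i i h)]
    linarith [hnonneg i i.isLt.le (dst i)]
  have hdst_notMem : dst i ∉ (Iic i).image src := by
    simp only [mem_image, mem_Iic, not_exists, not_and]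
    exact fun j hj h => absurd (horder i j h.symm) (not_lt.2 hj)
  calc ∑ j ∈ Iic i, s n (src j) = ∑ u ∈ (Iic i).image src, s (i + 1) u := by
        rw [sum_image hinj.injOn]
        exact sum_congr rfl hfrozen
    _ ≤ ∑ u, s (i + 1) u - s (i + 1) (dst i) := by
        rw [le_sub_iff_add_le, add_comm, ← sum_insert hdst_notMem]
        exact sum_le_univ_sum_of_nonneg (hnonneg _ i.isLt)
    _ ≤ ∑ u, s 0 u - cap i := by
        rw [hs.sum_eq i.isLt, ← hamt_cap]
        linarith

theorem sum_le (hs : IsTransferSeq s src dst amt) (hinj : Function.Injective src)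
    (horder : ∀ i j, dst i = src j → i < j) (h0 : ∀ u, 0 ≤ s 0 u)
    (hamt : ∀ i, amt i = min (s i (src i)) (cap i)) (hcap : ∀ i, 0 ≤ cap i)
    {W : Finset V} {B : ℝ} (hW : ∀ w ∈ W, s n w ≠ 0 → ∃ i, src i = w) (hB : 0 ≤ B)
    (hcapB : ∀ i, src i ∈ W → ∑ u, s 0 u - cap i ≤ B) : ∑ w ∈ W, s n w ≤ B := by
  have hnonneg := hs.nonneg h0 hamt hcap le_rfl
  set J := univ.filter fun i => src i ∈ W ∧ s n (src i) ≠ 0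
  have hJ : ∑ w ∈ W, s n w = ∑ j ∈ J, s n (src j) := by
    rw [← sum_filter_ne_zero, ← sum_image hinj.injOn]
    refine sum_congr ?_ fun _ _ => rfl
    ext w
    simp only [J, mem_filter, mem_image, mem_univ, true_and]
    constructor
    · rintro ⟨hw, hw0⟩
      obtain ⟨i, rfl⟩ := hW w hw hw0
      exact ⟨i, ⟨hw, hw0⟩, rfl⟩
    · rintro ⟨i, hi, rfl⟩
      exact hi
  rcases J.eq_empty_or_nonempty with hJe | hJne
  · rwa [hJ, hJe, sum_empty]
  · have hi := J.max'_mem hJne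
    simp only [J, mem_filter, mem_univ, true_and] at hi
    calc ∑ w ∈ W, s n w = ∑ j ∈ J, s n (src j) := hJ
      _ ≤ ∑ j ∈ Iic (J.max' hJne), s n (src j) :=
          sum_le_sum_of_subset_of_nonneg (fun j hj => mem_Iic.2 (J.le_max' j hj))
            fun j _ _ => hnonneg _
      _ ≤ ∑ u, s 0 u - cap (J.max' hJne) :=
          hs.sum_Iic_le hinj horder h0 hamt hcap _ (lt_of_le_of_ne (hnonneg _) (Ne.symm hi.2))
      _ ≤ B := hcapB _ hi.1

theorem sum_descendants_le_subtreeSum {p : V → V} {r y : V} {U : Finset V} {dem : V → ℝ}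
    (hs : IsTransferSeq s src dst amt) (hinj : Function.Injective src)
    (horder : ∀ i j, dst i = src j → i < j) (h0 : ∀ u, 0 ≤ s 0 u) (hdem : ∀ u, 0 ≤ dem u)
    (hamt : ∀ i, amt i = min (s i (src i)) (∑ u, s 0 u - subtreeSum p r U dem (src i)))
    (hcap : ∀ i, 0 ≤ ∑ u, s 0 u - subtreeSum p r U dem (src i))
    (hsupp : ∀ w, w ≠ r → s n w ≠ 0 → ∃ i, src i = w) (hy : y ≠ r) :
    ∑ w ∈ descendants p r U y, s n w ≤ subtreeSum p r U dem y := by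
  refine hs.sum_le hinj horder h0 hamt hcap (fun w hw hw0 => ?_)
    (sum_nonneg fun w _ => hdem w) fun i hi => ?_
  · simp only [descendants, mem_filter, mem_univ, true_and] at hw
    exact hsupp w (fun h => hy (IsDesc.eq_of_root (h ▸ hw.2))) hw0
  · simp only [descendants, mem_filter, mem_univ, true_and] at hi
    rw [sub_sub_cancel]
    exact sum_le_sum_of_subset_of_nonneg (descendants_subset_of_isDesc hi.2) fun _ _ _ => hdem _

theorem sum_parentEdgeFlow_sub_sum {p : V → V} {r : V} {T : Finset V} {v : Fin n → V}
    {a : V → ℝ}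
    (hs : IsTransferSeq s v (fun i => p (v i)) (fun i => a (v i)))
    (hvinj : Function.Injective v) (hvmem : ∀ i, v i ∈ T ∧ v i ≠ r)
    (hvsurj : ∀ u ∈ T, u ≠ r → ∃ i, v i = u) (x : V) :
    ∑ y, parentEdgeFlow p r T a x y - ∑ y, parentEdgeFlow p r T a y x = s 0 x - s n x := by
  have hreindex : ∀ G : V → ℝ, ∑ u ∈ T.erase r, G u = ∑ i, G (v i) := by
    intro G
    have hT : T.erase r = univ.map ⟨v, hvinj⟩ := by
      ext u
      simp only [mem_erase, mem_map, mem_univ, true_and, Function.Embedding.coeFn_mk]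
      exact ⟨fun hu => hvsurj u hu.2 hu.1, fun ⟨i, hi⟩ => hi ▸ (hvmem i).symm⟩
    rw [hT, sum_map]
    rfl
  rw [_root_.sum_parentEdgeFlow_sub_sum, children, sum_filter, ← sum_ite_eq' (T.erase r) x a,
    hreindex, hreindex, ← sum_sub_distrib, ← neg_sub, hs.sub_apply_zero, ← sum_neg_distrib]
  refine sum_congr rfl fun i _ => ?_
  simp only [eq_comm (a := x)]
  ring

end IsTransferSeq

end Transfer

end

open Classical in
theorem stmt_6_general {V : Type*} [Fintype V]
    (b : V → ℝ) (r : V) (T U : Finset V) (pT pU : V → V)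
    (n : ℕ) (v : Fin n → V) (D : V → ℝ) (s : ℕ → V → ℝ) (a : V → ℝ) (f : V × V → ℝ)
    (hbsum : ∑ u, b u = 0)
    (hsupply : ∑ u, max (b u) 0 = 1)
    (hrU : r ∈ U)
    (hTsupp : ∀ u, 0 < b u → u ∈ T)
    (hUdem : ∀ u, b u < 0 → u ∈ U)
    (hpT : ∀ u ∈ T, u ≠ r → pT u ∈ T)
    (hpU : ∀ u ∈ U, u ≠ r → pU u ∈ U)
    (hpUroot : ∀ u ∈ U, ∃ k : ℕ, pU^[k] u = r)
    (hD : ∀ u, D u = if u ∈ U then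
      ∑ w ∈ Finset.univ.filter (fun w => w ∈ U ∧ IsDesc pU r w u), max (-b w) 0
      else 0)
    (hvinj : Function.Injective v)
    (hvmem : ∀ i, v i ∈ T ∧ v i ≠ r)
    (hvsurj : ∀ u ∈ T, u ≠ r → ∃ i, v i = u)
    (horder : ∀ i j : Fin n, pT (v i) = v j → i < j)
    (hs0 : ∀ u, s 0 u = max (b u) 0)
    (hstep : ∀ i : Fin n,
      s ((i : ℕ) + 1) (v i) = s i (v i) - min (s i (v i)) (1 - D (v i)) ∧
      s ((i : ℕ) + 1) (pT (v i)) = s i (pT (v i)) + min (s i (v i)) (1 - D (v i)) ∧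
      ∀ u, u ≠ v i → u ≠ pT (v i) → s ((i : ℕ) + 1) u = s i u)
    (ha : ∀ i : Fin n, a (v i) = min (s i (v i)) (1 - D (v i)))
    (hf : ∀ x y : V, f (x, y) =
      (if x ∈ T ∧ x ≠ r ∧ y = pT x then a x else 0) +
      (if y ∈ U ∧ y ≠ r ∧ x = pU y then
        D y - ∑ u ∈ Finset.univ.filter (fun u => u ∈ U ∧ IsDesc pU r u y),
          (if u ∈ T then s n u else 0)
       else 0)) :
    (∀ x y : V, 0 ≤ f (x, y)) ∧
    (∀ x : V, b x + (∑ u, f (u, x)) - (∑ w, f (x, w)) = 0) := by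
  set dem : V → ℝ := fun u => max (-b u) 0
  have hdem_sum : ∑ u, dem u = 1 := (sum_max_neg_zero_eq_of_sum_eq_zero hbsum).trans hsupply
  have hD_eq : D = subtreeSum pU r U dem := funext fun u => by
    rw [hD]
    split_ifs with hu
    · rfl
    · rw [subtreeSum, descendants_eq_empty_of_notMem hpU hu, sum_empty]
  have hinit_sum : ∑ u, s 0 u = 1 := by simp only [hs0, hsupply]
  have hcap : ∀ i, 0 ≤ ∑ u, s 0 u - subtreeSum pU r U dem (v i) := fun i => by
    rw [hinit_sum, ← hdem_sum, sub_nonneg]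
    exact sum_le_univ_sum_of_nonneg fun w => le_max_right _ _
  have hamt : ∀ i, a (v i) = min (s i (v i)) (∑ u, s 0 u - subtreeSum pU r U dem (v i)) := by
    simpa only [hinit_sum, hD_eq] using ha
  have hs : IsTransferSeq s v (fun i => pT (v i)) (fun i => a (v i)) :=
    isTransferSeq_of_apply (fun i h => lt_irrefl i (horder i i h.symm))
      (fun i => ha i ▸ (hstep i).1) (fun i => ha i ▸ (hstep i).2.1) fun i => (hstep i).2.2
  have h0 : ∀ u, 0 ≤ s 0 u := fun u => hs0 u ▸ le_max_right _ _
  have hsn_T : ∀ u ∉ T, s n u = 0 := fun u hu =>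
    hs.apply_eq_zero_of_notMem (fun i => (hvmem i).1) (fun i => hpT _ (hvmem i).1 (hvmem i).2)
      (fun u hu => hs0 u ▸ max_eq_right (not_lt.1 fun h => hu (hTsupp u h))) hu
  have hsn_U : ∀ u ∉ U, s n u = 0 := fun u hu => by
    by_cases huT : u ∈ T
    · obtain ⟨i, rfl⟩ := hvsurj u huT fun h => hu (h ▸ hrU)
      refine hs.apply_src_eq_zero hvinj horder h0 hamt hcap i ?_
      rw [← hD_eq, hD, if_neg hu, sub_zero]
    · exact hsn_T u huT
  set h : V → ℝ := fun u => dem u - s n u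
  have hf' : ∀ x y, f (x, y) = parentEdgeFlow pT r T a x y
      + parentEdgeFlow pU r U (subtreeSum pU r U h) y x := by
    have hsT : ∀ u, (if u ∈ T then s n u else 0) = s n u := fun u => by
      split_ifs with hu
      exacts [rfl, (hsn_T u hu).symm]
    intro x y
    simp only [hf, hsT, hD_eq, parentEdgeFlow, subtreeSum, h, sum_sub_distrib]
    rfl
  have hsupp : ∀ x ∉ U, h x = 0 := fun x hx => by
    simp only [h, dem, hsn_U x hx, max_eq_right (neg_nonpos.2 (not_lt.1 fun h => hx (hUdem x h)))]
    ring
  have hsum : ∑ x, h x = 0 := by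
    simp only [h, sum_sub_distrib, hdem_sum, hs.sum_eq le_rfl, hinit_sum, sub_self]
  refine ⟨fun x y => ?_, fun x => ?_⟩
  · rw [hf']
    refine add_nonneg (parentEdgeFlow_nonneg (fun x hx hxr => ?_) _ _)
      (parentEdgeFlow_nonneg (fun y _ hyr => ?_) _ _)
    · obtain ⟨i, rfl⟩ := hvsurj x hx hxr
      exact hs.amt_nonneg h0 hamt hcap i
    · rw [subtreeSum, sum_sub_distrib, sub_nonneg]
      exact hs.sum_descendants_le_subtreeSum hvinj horder h0 (fun u => le_max_right _ _) hamt
        hcap (fun w hwr hw0 => hvsurj w (by_contra fun h => hw0 (hsn_T w h)) hwr) hyr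
  · have hT := hs.sum_parentEdgeFlow_sub_sum hvinj hvmem hvsurj x
    have hU := sum_parentEdgeFlow_subtreeSum_sub_sum hrU hpU hpUroot hsupp hsum x
    simp only [hf', sum_add_distrib]
    linarith [max_zero_sub_max_neg_zero_eq_self (b x), hs0 x]

open Classical in
/-- The flow constructed by Steps 2′ and 3′ of the modified Goldberg–Rao
algorithm is nonnegative and has zero balance at every vertex. -/
theorem stmt_6 {V : Type*} [Fintype V]
    (b : V → ℝ) (r : V) (T U : Finset V) (pT pU : V → V)
    (n : ℕ) (v : Fin n → V) (D : V → ℝ) (s : ℕ → V → ℝ) (a : V → ℝ) (f : V × V → ℝ)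
    (hbsum : ∑ u, b u = 0)
    (hsupply : ∑ u, max (b u) 0 = 1)
    (hrT : r ∈ T) (hrU : r ∈ U)
    (hTsupp : ∀ u, 0 < b u → u ∈ T)
    (hUdem : ∀ u, b u < 0 → u ∈ U)
    (hpT : ∀ u ∈ T, u ≠ r → pT u ∈ T)
    (hpTroot : ∀ u ∈ T, ∃ k : ℕ, pT^[k] u = r)
    (hpU : ∀ u ∈ U, u ≠ r → pU u ∈ U)
    (hpUroot : ∀ u ∈ U, ∃ k : ℕ, pU^[k] u = r)
    (hD : ∀ u, D u = if u ∈ U then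
      ∑ w ∈ Finset.univ.filter (fun w => w ∈ U ∧ IsDesc pU r w u), max (-b w) 0
      else 0)
    (hvinj : Function.Injective v)
    (hvmem : ∀ i, v i ∈ T ∧ v i ≠ r)
    (hvsurj : ∀ u ∈ T, u ≠ r → ∃ i, v i = u)
    (horder : ∀ i j : Fin n, pT (v i) = v j → i < j)
    (hs0 : ∀ u, s 0 u = max (b u) 0)
    (hstep : ∀ i : Fin n,
      s ((i : ℕ) + 1) (v i) = s i (v i) - min (s i (v i)) (1 - D (v i)) ∧
      s ((i : ℕ) + 1) (pT (v i)) = s i (pT (v i)) + min (s i (v i)) (1 - D (v i)) ∧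
      ∀ u, u ≠ v i → u ≠ pT (v i) → s ((i : ℕ) + 1) u = s i u)
    (ha : ∀ i : Fin n, a (v i) = min (s i (v i)) (1 - D (v i)))
    (hf : ∀ x y : V, f (x, y) =
      (if x ∈ T ∧ x ≠ r ∧ y = pT x then a x else 0) +
      (if y ∈ U ∧ y ≠ r ∧ x = pU y then
        D y - ∑ u ∈ Finset.univ.filter (fun u => u ∈ U ∧ IsDesc pU r u y),
          (if u ∈ T then s n u else 0)
       else 0)) :
    (∀ x y : V, 0 ≤ f (x, y)) ∧
    (∀ x : V, b x + (∑ u, f (u, x)) - (∑ w, f (x, w)) = 0) :=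
  stmt_6_general b r T U pT pU n v D s a f hbsum hsupply hrU hTsupp hUdem hpT hpU hpUroot hD hvinj
    hvmem hvsurj horder hs0 hstep ha hf
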